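/- arXiv:2407.07496 — 2 statements merged into one kernel-verified Lean document; each statement's English description precedes it below -/
import Mathlib

section
/- Let μ > 0 and p ∈ ℕ. Then there exists a unique real number Λ in the open interval (μ² + π²(1+p)²/4, μ² + π²(2+p)²/4) such that, writing s = √(Λ − μ²), one has [s·sin s·cosh μ + μ·sinh μ·cos s] · [s·cos s·sinh μ − μ·cosh μ·sin s] = 0. -/
/-!
With `s = √(Λ - μ²)` the interval for `Λ` becomes `s ∈ ((p+1)π/2, (p+2)π/2)`, on which
`sin s cos s` has a constant sign. Where it is negative, `cotFactor` cannot vanish, `tanFactor`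
changes sign between the endpoints, and `tanFactor / cos = s tan s cosh μ + μ sinh μ` is strictly
increasing. Where it is positive the roles swap: `cotFactor / cos = s sinh μ - μ cosh μ tan s` is
strictly decreasing because `sinh μ < μ cosh μ`.
-/

open Real Set

theorem Real.sinh_lt_mul_cosh {x : ℝ} (hx : 0 < x) : sinh x < x * cosh x := by
  have hmono : StrictMonoOn (fun y => y * cosh y - sinh y) (Ici 0) := by
    refine strictMonoOn_of_hasDerivWithinAt_pos (convex_Ici 0) (by fun_prop)
      (f' := fun y => y * sinh y) (fun y _ => ?_) (fun y hy => ?_)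
    · have h : HasDerivAt (fun y => y * cosh y - sinh y) (1 * cosh y + y * sinh y - cosh y) y :=
        ((hasDerivAt_id' y).mul (hasDerivAt_cosh y)).sub (hasDerivAt_sinh y)
      exact (h.congr_deriv (by ring)).hasDerivWithinAt
    · rw [interior_Ici] at hy
      exact mul_pos hy (sinh_pos_iff.2 hy)
  simpa using hmono self_mem_Ici hx.le hx

theorem Real.sin_mul_cos_neg_of_mem_Ioo {k : ℤ} {x : ℝ} (hx : x ∈ Ioo (k * π - π / 2) (k * π)) :
    sin x * cos x < 0 := by
  have h : sin x * cos x = sin (2 * x - k * (2 * π)) / 2 := by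
    rw [sin_sub_int_mul_two_pi, sin_two_mul]; ring
  rw [h]
  exact div_neg_of_neg_of_pos (sin_neg_of_neg_of_neg_pi_lt (by linarith [hx.2])
    (by linarith [hx.1])) two_pos

theorem Real.sin_mul_cos_pos_of_mem_Ioo {k : ℤ} {x : ℝ} (hx : x ∈ Ioo (k * π) (k * π + π / 2)) :
    0 < sin x * cos x := by
  have h : sin x * cos x = sin (2 * x - k * (2 * π)) / 2 := by
    rw [sin_sub_int_mul_two_pi, sin_two_mul]; ring
  rw [h]
  exact div_pos (sin_pos_of_pos_of_lt_pi (by linarith [hx.1]) (by linarith [hx.2])) two_pos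

theorem existsUnique_mem_Ioo_eq_zero_of_injOn_div {f g : ℝ → ℝ} {a b : ℝ} (hab : a ≤ b)
    (hf : ContinuousOn f (Icc a b)) (hsign : f a * f b < 0)
    (hinj : InjOn (fun x => f x / g x) (Ioo a b)) : ∃! x, x ∈ Ioo a b ∧ f x = 0 := by
  obtain ⟨x, hx, hfx⟩ : ∃ x ∈ Ioo a b, f x = 0 := by
    rcases lt_or_gt_of_ne (left_ne_zero_of_mul hsign.ne) with ha | ha
    · exact intermediate_value_Ioo hab hf ⟨ha, pos_of_mul_neg_right hsign ha.le⟩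
    · exact intermediate_value_Ioo' hab hf ⟨neg_of_mul_neg_right hsign ha.le, ha⟩
  refine ⟨x, ⟨hx, hfx⟩, fun y ⟨hy, hfy⟩ => hinj hy hx ?_⟩
  simp only [hfx, hfy, zero_div]

theorem existsUnique_sqrt_sub_of_existsUnique {P : ℝ → Prop} {c A B : ℝ} (hA : 0 ≤ A)
    (h : ∃! s, s ∈ Ioo A B ∧ P s) :
    ∃! Λ, Λ ∈ Ioo (c + A ^ 2) (c + B ^ 2) ∧ P √(Λ - c) := by
  obtain ⟨s, ⟨hs, hPs⟩, huniq⟩ := h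
  have hs0 : 0 ≤ s := hA.trans hs.1.le
  refine ⟨c + s ^ 2, ⟨⟨?_, ?_⟩, by rwa [add_sub_cancel_left, sqrt_sq hs0]⟩, ?_⟩
  · linarith [pow_lt_pow_left₀ hs.1 hA two_ne_zero]
  · linarith [pow_lt_pow_left₀ hs.2 hs0 two_ne_zero]
  rintro Λ ⟨hΛ, hPΛ⟩
  have hmem : √(Λ - c) ∈ Ioo A B :=
    ⟨(lt_sqrt hA).2 (by linarith [hΛ.1]), (sqrt_lt' (hs0.trans_lt hs.2)).2 (by linarith [hΛ.2])⟩
  have hsq := sq_sqrt (show 0 ≤ Λ - c by nlinarith [hΛ.1])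
  rw [huniq _ ⟨hmem, hPΛ⟩] at hsq
  linarith

/-- Where `cos s ≠ 0`, `tanFactor μ s = 0` is the equation `s tan s = -μ tanh μ`. -/
noncomputable def tanFactor (μ s : ℝ) : ℝ := s * sin s * cosh μ + μ * sinh μ * cos s

/-- Where `sin s ≠ 0`, `cotFactor μ s = 0` is the equation `s cot s = μ coth μ`. -/
noncomputable def cotFactor (μ s : ℝ) : ℝ := s * cos s * sinh μ - μ * cosh μ * sin s

theorem hasDerivAt_tanFactor (μ s : ℝ) :
    HasDerivAt (tanFactor μ) ((sin s + s * cos s) * cosh μ - μ * sinh μ * sin s) s := by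
  have h : HasDerivAt (fun t => t * sin t * cosh μ + μ * sinh μ * cos t)
      ((1 * sin s + s * cos s) * cosh μ + μ * sinh μ * -sin s) s :=
    (((hasDerivAt_id' s).mul (hasDerivAt_sin s)).mul_const _).add
      ((hasDerivAt_cos s).const_mul _)
  exact h.congr_deriv (by ring)

theorem hasDerivAt_cotFactor (μ s : ℝ) :
    HasDerivAt (cotFactor μ) ((cos s - s * sin s) * sinh μ - μ * cosh μ * cos s) s := by
  have h : HasDerivAt (fun t => t * cos t * sinh μ - μ * cosh μ * sin t)
      ((1 * cos s + s * -sin s) * sinh μ - μ * cosh μ * cos s) s :=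
    (((hasDerivAt_id' s).mul (hasDerivAt_cos s)).mul_const _).sub
      ((hasDerivAt_sin s).const_mul _)
  exact h.congr_deriv (by ring)

theorem hasDerivAt_tanFactor_div_cos (μ : ℝ) {s : ℝ} (hs : cos s ≠ 0) :
    HasDerivAt (fun t => tanFactor μ t / cos t) (cosh μ * (s + sin s * cos s) / cos s ^ 2) s := by
  refine ((hasDerivAt_tanFactor μ s).div (hasDerivAt_cos s) hs).congr_deriv ?_
  unfold tanFactor
  congr 1
  linear_combination (s * cosh μ) * sin_sq_add_cos_sq s

theorem hasDerivAt_cotFactor_div_cos (μ : ℝ) {s : ℝ} (hs : cos s ≠ 0) :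
    HasDerivAt (fun t => cotFactor μ t / cos t)
      ((sinh μ * cos s ^ 2 - μ * cosh μ) / cos s ^ 2) s := by
  refine ((hasDerivAt_cotFactor μ s).div (hasDerivAt_cos s) hs).congr_deriv ?_
  unfold cotFactor
  congr 1
  linear_combination (-(μ * cosh μ)) * sin_sq_add_cos_sq s

theorem strictMonoOn_tanFactor_div_cos (μ : ℝ) {a b : ℝ} (ha : 1 / 2 ≤ a)
    (hcos : ∀ s ∈ Ioo a b, cos s ≠ 0) :
    StrictMonoOn (fun s => tanFactor μ s / cos s) (Ioo a b) := by
  have hd s (hs : s ∈ Ioo a b) := hasDerivAt_tanFactor_div_cos μ (hcos s hs)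
  refine strictMonoOn_of_deriv_pos (convex_Ioo a b)
    (fun s hs => (hd s hs).continuousAt.continuousWithinAt) fun s hs => ?_
  rw [interior_Ioo] at hs
  rw [(hd s hs).deriv]
  have hsc : -(1 / 2) ≤ sin s * cos s := by
    nlinarith [sq_nonneg (sin s + cos s), sin_sq_add_cos_sq s]
  have hpos : 0 < s + sin s * cos s := by linarith [hs.1]
  have := hcos s hs
  positivity

theorem strictAntiOn_cotFactor_div_cos {μ : ℝ} (hμ : 0 < μ) {a b : ℝ}
    (hcos : ∀ s ∈ Ioo a b, cos s ≠ 0) :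
    StrictAntiOn (fun s => cotFactor μ s / cos s) (Ioo a b) := by
  have hd s (hs : s ∈ Ioo a b) := hasDerivAt_cotFactor_div_cos μ (hcos s hs)
  refine strictAntiOn_of_deriv_neg (convex_Ioo a b)
    (fun s hs => (hd s hs).continuousAt.continuousWithinAt) fun s hs => ?_
  rw [interior_Ioo] at hs
  rw [(hd s hs).deriv]
  have hle : sinh μ * cos s ^ 2 ≤ sinh μ :=
    mul_le_of_le_one_right (sinh_pos_iff.2 hμ).le (cos_sq_le_one s)
  have := hcos s hs
  exact div_neg_of_neg_of_pos (by linarith [sinh_lt_mul_cosh hμ]) (by positivity)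

theorem existsUnique_tanFactor_mul_cotFactor_eq_zero_below_int_mul_pi {μ : ℝ} (hμ : 0 < μ)
    {k : ℤ} (hk : 0 < k) :
    ∃! s, s ∈ Ioo (k * π - π / 2) (k * π) ∧ tanFactor μ s * cotFactor μ s = 0 := by
  have hk1 : (1 : ℝ) ≤ k := by exact_mod_cast hk
  have ha : 1 / 2 ≤ k * π - π / 2 := by nlinarith [pi_gt_three]
  have hsc s (hs : s ∈ Ioo (k * π - π / 2) (k * π)) := sin_mul_cos_neg_of_mem_Ioo hs
  have hcos s (hs : s ∈ Ioo (k * π - π / 2) (k * π)) : cos s ≠ 0 := fun h =>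
    (hsc s hs).ne (by rw [h, mul_zero])
  have hcot s (hs : s ∈ Ioo (k * π - π / 2) (k * π)) : cotFactor μ s ≠ 0 := by
    have hpos : 0 < cotFactor μ s * cos s := by
      have := hcos s hs
      have : 0 < s := by linarith [hs.1]
      have : 0 < sinh μ := sinh_pos_iff.2 hμ
      rw [show cotFactor μ s * cos s
          = s * cos s ^ 2 * sinh μ + μ * cosh μ * -(sin s * cos s) by unfold cotFactor; ring]
      exact add_pos (by positivity) (mul_pos (by positivity) (neg_pos.2 (hsc s hs)))
    exact left_ne_zero_of_mul hpos.ne'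
  have hsign : tanFactor μ (k * π - π / 2) * tanFactor μ (k * π) < 0 := by
    have : 0 < sinh μ := sinh_pos_iff.2 hμ
    calc tanFactor μ (k * π - π / 2) * tanFactor μ (k * π)
        = -((k * π - π / 2) * μ * cosh μ * sinh μ) * cos (k * π) ^ 2 := by
          unfold tanFactor
          rw [sin_sub_pi_div_two, cos_sub_pi_div_two, sin_int_mul_pi]
          ring
      _ < 0 := by
          have : 0 < k * π - π / 2 := by linarith
          rw [cos_sq', sin_int_mul_pi]
          norm_num
          positivity
  rw [existsUnique_congr fun s => and_congr_right fun hs => by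
    rw [mul_eq_zero, or_iff_left (hcot s hs)]]
  exact existsUnique_mem_Ioo_eq_zero_of_injOn_div (by linarith [pi_pos])
    (by unfold tanFactor; fun_prop) hsign (strictMonoOn_tanFactor_div_cos μ ha hcos).injOn

theorem existsUnique_tanFactor_mul_cotFactor_eq_zero_above_int_mul_pi {μ : ℝ} (hμ : 0 < μ)
    {k : ℤ} (hk : 0 < k) :
    ∃! s, s ∈ Ioo (k * π) (k * π + π / 2) ∧ tanFactor μ s * cotFactor μ s = 0 := by
  have hk0 : (0 : ℝ) < k * π := by positivity
  have hsc s (hs : s ∈ Ioo (k * π) (k * π + π / 2)) := sin_mul_cos_pos_of_mem_Ioo hs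
  have hcos s (hs : s ∈ Ioo (k * π) (k * π + π / 2)) : cos s ≠ 0 := fun h =>
    (hsc s hs).ne' (by rw [h, mul_zero])
  have htan s (hs : s ∈ Ioo (k * π) (k * π + π / 2)) : tanFactor μ s ≠ 0 := by
    have hpos : 0 < tanFactor μ s * cos s := by
      have := hcos s hs
      have hs0 : 0 < s := by linarith [hs.1]
      have : 0 < sinh μ := sinh_pos_iff.2 hμ
      rw [show tanFactor μ s * cos s
          = s * (sin s * cos s) * cosh μ + μ * sinh μ * cos s ^ 2 by unfold tanFactor; ring]
      exact add_pos (mul_pos (mul_pos hs0 (hsc s hs)) (cosh_pos μ)) (by positivity)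
    exact left_ne_zero_of_mul hpos.ne'
  have hsign : cotFactor μ (k * π) * cotFactor μ (k * π + π / 2) < 0 := by
    have : 0 < sinh μ := sinh_pos_iff.2 hμ
    calc cotFactor μ (k * π) * cotFactor μ (k * π + π / 2)
        = -(k * π * μ * cosh μ * sinh μ) * cos (k * π) ^ 2 := by
          unfold cotFactor
          rw [sin_add_pi_div_two, cos_add_pi_div_two, sin_int_mul_pi]
          ring
      _ < 0 := by
          rw [cos_sq', sin_int_mul_pi]
          norm_num
          positivity
  rw [existsUnique_congr fun s => and_congr_right fun hs => by
    rw [mul_eq_zero, or_iff_right (htan s hs)]]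
  exact existsUnique_mem_Ioo_eq_zero_of_injOn_div (by linarith [pi_pos])
    (by unfold cotFactor; fun_prop) hsign (strictAntiOn_cotFactor_div_cos hμ hcos).injOn

theorem existsUnique_tanFactor_mul_cotFactor_eq_zero {μ : ℝ} (hμ : 0 < μ) (n : ℕ) :
    ∃! s, s ∈ Ioo ((1 + n) * π / 2) ((2 + n) * π / 2) ∧ tanFactor μ s * cotFactor μ s = 0 := by
  obtain ⟨m, rfl | rfl⟩ := Nat.even_or_odd' n
  · rw [show (1 + ((2 * m : ℕ) : ℝ)) * π / 2 = ((m + 1 : ℤ) : ℝ) * π - π / 2 by push_cast; ring,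
      show (2 + ((2 * m : ℕ) : ℝ)) * π / 2 = ((m + 1 : ℤ) : ℝ) * π by push_cast; ring]
    exact existsUnique_tanFactor_mul_cotFactor_eq_zero_below_int_mul_pi hμ (by omega)
  · rw [show (1 + ((2 * m + 1 : ℕ) : ℝ)) * π / 2 = ((m + 1 : ℤ) : ℝ) * π by push_cast; ring,
      show (2 + ((2 * m + 1 : ℕ) : ℝ)) * π / 2 = ((m + 1 : ℤ) : ℝ) * π + π / 2 by
        push_cast; ring]
    exact existsUnique_tanFactor_mul_cotFactor_eq_zero_above_int_mul_pi hμ (by omega)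

/-- Dirichlet (β → ∞) case: for μ > 0 and p ∈ ℕ there is a unique Λ in
(μ² + π²(1+p)²/4, μ² + π²(2+p)²/4) satisfying, with s = √(Λ − μ²),
[s sin s cosh μ + μ sinh μ cos s]·[s cos s sinh μ − μ cosh μ sin s] = 0. -/
theorem stmt_2 (μ : ℝ) (hμ : 0 < μ) (p : ℕ) :
    ∃! Λ : ℝ,
      Λ ∈ Set.Ioo (μ ^ 2 + π ^ 2 * (1 + (p : ℝ)) ^ 2 / 4)
        (μ ^ 2 + π ^ 2 * (2 + (p : ℝ)) ^ 2 / 4) ∧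
      (Real.sqrt (Λ - μ ^ 2) * Real.sin (Real.sqrt (Λ - μ ^ 2)) * Real.cosh μ +
          μ * Real.sinh μ * Real.cos (Real.sqrt (Λ - μ ^ 2))) *
        (Real.sqrt (Λ - μ ^ 2) * Real.cos (Real.sqrt (Λ - μ ^ 2)) * Real.sinh μ -
          μ * Real.cosh μ * Real.sin (Real.sqrt (Λ - μ ^ 2))) = 0 := by
  rw [show π ^ 2 * (1 + (p : ℝ)) ^ 2 / 4 = ((1 + p) * π / 2) ^ 2 by ring,
    show π ^ 2 * (2 + (p : ℝ)) ^ 2 / 4 = ((2 + p) * π / 2) ^ 2 by ring]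
  exact existsUnique_sqrt_sub_of_existsUnique (by positivity)
    (existsUnique_tanFactor_mul_cotFactor_eq_zero hμ p)
end

section
/- Let β > 0, m, n ∈ ℕ with m, n ≥ 1, and a, b, c, d ∈ ℝ with a = −c and b = d (or alternatively a = c and b = −d). Set μ² = m² + n², let γ > 0, and let Z : ℝ → ℝ be either Z(z) = cos(γz) with β·cos γ = γ·sin γ, or Z(z) = sin(γz) with β·sin γ = −γ·cos γ. Set λ = μ² + γ², define u = (u₁, u₂, u₃) : ℝ³ → ℝ³ by u₁(x,y,z) = Z(z)·P^u_{m,n}(x,y), u₂(x,y,z) = −(m/n)·Z(z)·P^v_{m,n}(x,y), u₃ = 0, and for γ₀ ∈ ℝ define v(t, x, y, z) = γ₀·e^{−λt}·u(x, y, z). Then for all t ∈ ℝ and (x,y,z) ∈ ℝ³: (i) ∂_t v − Δv + (v·∇)v = 0 (componentwise, with Δ the Laplacian in (x,y,z) and ((v·∇)v)_i = Σ_j v_j ∂_j v_i); (ii) ∂ₓv₁ + ∂_y v₂ + ∂_z v₃ = 0; (iii) v₃ = 0; (iv) ∂_z v_j(t,x,y,1) + β·v_j(t,x,y,1) = 0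 and −∂_z v_j(t,x,y,−1) + β·v_j(t,x,y,−1) = 0 for j = 1,2. -/
open Real

/-- The periodic profile 𝒫ᵘ_{m,n}. -/
noncomputable def Pu (m n : ℕ) (a b c d : ℝ) (x y : ℝ) : ℝ :=
  a * Real.cos (m * x) * Real.sin (n * y) - b * Real.sin (m * x) * Real.sin (n * y)
    - c * Real.sin (m * x) * Real.cos (n * y) + d * Real.cos (m * x) * Real.cos (n * y)

/-- The periodic profile 𝒫ᵛ_{m,n}. -/
noncomputable def Pv (m n : ℕ) (a b c d : ℝ) (x y : ℝ) : ℝ :=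
  a * Real.sin (m * x) * Real.cos (n * y) + b * Real.cos (m * x) * Real.cos (n * y)
    - c * Real.cos (m * x) * Real.sin (n * y) - d * Real.sin (m * x) * Real.sin (n * y)

/-!
Under either coefficient constraint the two profiles collapse to one sinusoid:
`Pu = g (m x + σ n y)` and `Pv = σ g (m x + σ n y)` with `g s = d cos s - c sin s`, `σ = ±1`.
Hence `v = e^{-λt} Z(z) g(k · (x, y)) w` is a shear wave with wave vector `k = (m, σ n)` and
amplitude `w = γ₀ (1, -σ m / n, 0)` orthogonal to `k`. Both the advection term and the divergence
are multiples of `w · k = 0`; each component is a product of eigenfunctions of `∂ₓ²`, `∂_y²`,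
`∂_z²` with eigenvalues summing to `-λ`, so the heat part cancels; and the boundary conditions
are exactly the transcendental equations defining `γ`.
-/

noncomputable def sinusoid (k A B s : ℝ) : ℝ := A * cos (k * s) + B * sin (k * s)

lemma hasDerivAt_sinusoid (k A B s : ℝ) :
    HasDerivAt (sinusoid k A B) (sinusoid k (k * B) (-(k * A)) s) s := by
  have hk : HasDerivAt (fun s => k * s) k s := by simpa using (hasDerivAt_id s).const_mul k
  exact ((hk.cos.const_mul A).add (hk.sin.const_mul B)).congr_deriv (by simp only [sinusoid]; ring)

lemma hasDerivAt_sinusoid_deriv (k A B s : ℝ) :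
    HasDerivAt (sinusoid k (k * B) (-(k * A))) (-k ^ 2 * sinusoid k A B s) s :=
  (hasDerivAt_sinusoid k _ _ s).congr_deriv (by simp only [sinusoid]; ring)

lemma Pu_Pv_eq_sinusoid {m n : ℕ} {a b c d : ℝ} (hcoef : (a = -c ∧ b = d) ∨ (a = c ∧ b = -d)) :
    ∃ σ : ℝ, σ ^ 2 = 1 ∧ ∀ x y,
      Pu m n a b c d x y = sinusoid 1 d (-c) (m * x + σ * n * y) ∧
      Pv m n a b c d x y = σ * sinusoid 1 d (-c) (m * x + σ * n * y) := by
  rcases hcoef with ⟨rfl, rfl⟩ | ⟨rfl, rfl⟩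
  · refine ⟨1, one_pow 2, fun x y => ?_⟩
    simp only [Pu, Pv, sinusoid, one_mul, cos_add, sin_add]
    constructor <;> ring
  · refine ⟨-1, by norm_num, fun x y => ?_⟩
    simp only [Pu, Pv, sinusoid, one_mul, neg_mul, ← sub_eq_add_neg]
    simp only [cos_sub, sin_sub]
    constructor <;> ring

lemma exists_sinusoid_robin {β γ : ℝ} {Z : ℝ → ℝ}
    (hZ : ((Z = fun z => cos (γ * z)) ∧ β * cos γ = γ * sin γ) ∨
          ((Z = fun z => sin (γ * z)) ∧ β * sin γ = -(γ * cos γ))) :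
    ∃ A B : ℝ, Z = sinusoid γ A B ∧
      1 * sinusoid γ (γ * B) (-(γ * A)) 1 + β * Z 1 = 0 ∧
      -1 * sinusoid γ (γ * B) (-(γ * A)) (-1) + β * Z (-1) = 0 := by
  rcases hZ with ⟨rfl, hγ⟩ | ⟨rfl, hγ⟩
  · refine ⟨1, 0, funext fun z => by simp [sinusoid], ?_, ?_⟩ <;>
      simp only [sinusoid, mul_one, mul_neg, cos_neg, sin_neg] <;> linear_combination hγ
  · refine ⟨0, 1, funext fun z => by simp [sinusoid], ?_, ?_⟩ <;>
      simp only [sinusoid, mul_one, mul_neg, cos_neg, sin_neg]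
    · linear_combination hγ
    · linear_combination -hγ

/-- Component `vᵢ = v` of `∂ₜv - Δv + (v·∇)v` for `v = (v₁, v₂, v₃)` (constant pressure). -/
noncomputable def momentumResidual (v₁ v₂ v₃ v : ℝ → ℝ → ℝ → ℝ → ℝ) (t x y z : ℝ) : ℝ :=
  deriv (fun t' => v t' x y z) t
    - (deriv (deriv (fun x' => v t x' y z)) x + deriv (deriv (fun y' => v t x y' z)) y
        + deriv (deriv (fun z' => v t x y z')) z)
    + (v₁ t x y z * deriv (fun x' => v t x' y z) x
        + v₂ t x y z * deriv (fun y' => v t x y' z) y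
        + v₃ t x y z * deriv (fun z' => v t x y z') z)

noncomputable def divergence (v₁ v₂ v₃ : ℝ → ℝ → ℝ → ℝ → ℝ) (t x y z : ℝ) : ℝ :=
  deriv (fun x' => v₁ t x' y z) x + deriv (fun y' => v₂ t x y' z) y
    + deriv (fun z' => v₃ t x y z') z

noncomputable def shearWave (lam k₁ k₂ : ℝ) (Z g : ℝ → ℝ) (w t x y z : ℝ) : ℝ :=
  w * (exp (-lam * t) * Z z * g (k₁ * x + k₂ * y))

namespace shearWave

variable {lam k₁ k₂ ω ζ w₁ w₂ : ℝ} {Z Z' g g' : ℝ → ℝ} {w t x y z : ℝ}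

lemma hasDerivAt_t :
    HasDerivAt (fun t => shearWave lam k₁ k₂ Z g w t x y z)
      (-lam * shearWave lam k₁ k₂ Z g w t x y z) t := by
  have he : HasDerivAt (fun t => exp (-lam * t)) (exp (-lam * t) * -lam) t := by
    simpa using ((hasDerivAt_id t).const_mul (-lam)).exp
  exact ((he.mul_const _).mul_const _).const_mul w |>.congr_deriv (by simp only [shearWave]; ring)

lemma hasDerivAt_x (hg : ∀ s, HasDerivAt g (g' s) s) :
    HasDerivAt (fun x => shearWave lam k₁ k₂ Z g w t x y z)
      (k₁ * shearWave lam k₁ k₂ Z g' w t x y z) x := by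
  have hs : HasDerivAt (fun x => k₁ * x + k₂ * y) k₁ x := by
    simpa using ((hasDerivAt_id x).const_mul k₁).add_const (k₂ * y)
  exact ((hg _).comp x hs).const_mul (exp (-lam * t) * Z z) |>.const_mul w
    |>.congr_deriv (by simp only [shearWave]; ring)

lemma hasDerivAt_y (hg : ∀ s, HasDerivAt g (g' s) s) :
    HasDerivAt (fun y => shearWave lam k₁ k₂ Z g w t x y z)
      (k₂ * shearWave lam k₁ k₂ Z g' w t x y z) y := by
  have hs : HasDerivAt (fun y => k₁ * x + k₂ * y) k₂ y := by
    simpa using ((hasDerivAt_id y).const_mul k₂).const_add (k₁ * x)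
  exact ((hg _).comp y hs).const_mul (exp (-lam * t) * Z z) |>.const_mul w
    |>.congr_deriv (by simp only [shearWave]; ring)

lemma hasDerivAt_z (hZ : HasDerivAt Z (Z' z) z) :
    HasDerivAt (fun z => shearWave lam k₁ k₂ Z g w t x y z)
      (shearWave lam k₁ k₂ Z' g w t x y z) z :=
  ((hZ.const_mul (exp (-lam * t))).mul_const (g (k₁ * x + k₂ * y))).const_mul w
    |>.congr_deriv (by simp only [shearWave])

lemma deriv_deriv_x (hg : ∀ s, HasDerivAt g (g' s) s) (hg' : ∀ s, HasDerivAt g' (-ω * g s) s) :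
    deriv (deriv fun x => shearWave lam k₁ k₂ Z g w t x y z) x
      = -(ω * k₁ ^ 2) * shearWave lam k₁ k₂ Z g w t x y z := by
  have h : deriv (fun x => shearWave lam k₁ k₂ Z g w t x y z)
      = fun x => k₁ * shearWave lam k₁ k₂ Z g' w t x y z := funext fun x => (hasDerivAt_x hg).deriv
  rw [h, ((hasDerivAt_x hg').const_mul k₁).deriv]
  simp only [shearWave]; ring

lemma deriv_deriv_y (hg : ∀ s, HasDerivAt g (g' s) s) (hg' : ∀ s, HasDerivAt g' (-ω * g s) s) :
    deriv (deriv fun y => shearWave lam k₁ k₂ Z g w t x y z) y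
      = -(ω * k₂ ^ 2) * shearWave lam k₁ k₂ Z g w t x y z := by
  have h : deriv (fun y => shearWave lam k₁ k₂ Z g w t x y z)
      = fun y => k₂ * shearWave lam k₁ k₂ Z g' w t x y z := funext fun y => (hasDerivAt_y hg).deriv
  rw [h, ((hasDerivAt_y hg').const_mul k₂).deriv]
  simp only [shearWave]; ring

lemma deriv_deriv_z (hZ : ∀ z, HasDerivAt Z (Z' z) z) (hZ' : ∀ z, HasDerivAt Z' (-ζ * Z z) z) :
    deriv (deriv fun z => shearWave lam k₁ k₂ Z g w t x y z) z
      = -ζ * shearWave lam k₁ k₂ Z g w t x y z := by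
  have h : deriv (fun z => shearWave lam k₁ k₂ Z g w t x y z)
      = fun z => shearWave lam k₁ k₂ Z' g w t x y z := funext fun z => (hasDerivAt_z (hZ z)).deriv
  rw [h, (hasDerivAt_z (Z' := fun z => -ζ * Z z) (hZ' z)).deriv]
  simp only [shearWave]; ring

lemma momentumResidual_eq_zero (hg : ∀ s, HasDerivAt g (g' s) s)
    (hg' : ∀ s, HasDerivAt g' (-ω * g s) s) (hZ : ∀ z, HasDerivAt Z (Z' z) z)
    (hZ' : ∀ z, HasDerivAt Z' (-ζ * Z z) z) (hlam : lam = ω * (k₁ ^ 2 + k₂ ^ 2) + ζ)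
    (hwk : w₁ * k₁ + w₂ * k₂ = 0) (w : ℝ) :
    momentumResidual (shearWave lam k₁ k₂ Z g w₁) (shearWave lam k₁ k₂ Z g w₂)
      (shearWave lam k₁ k₂ Z g 0) (shearWave lam k₁ k₂ Z g w) t x y z = 0 := by
  rw [momentumResidual, hasDerivAt_t.deriv, deriv_deriv_x hg hg', deriv_deriv_y hg hg',
    deriv_deriv_z hZ hZ', (hasDerivAt_x hg).deriv, (hasDerivAt_y hg).deriv,
    (hasDerivAt_z (hZ z)).deriv]
  simp only [shearWave]
  linear_combination (-(w * (exp (-lam * t) * Z z * g (k₁ * x + k₂ * y)))) * hlam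
    + w * (exp (-lam * t) * Z z) ^ 2 * g (k₁ * x + k₂ * y) * g' (k₁ * x + k₂ * y) * hwk

lemma divergence_eq_zero (hg : ∀ s, HasDerivAt g (g' s) s) (hZ : ∀ z, HasDerivAt Z (Z' z) z)
    (hwk : w₁ * k₁ + w₂ * k₂ = 0) :
    divergence (shearWave lam k₁ k₂ Z g w₁) (shearWave lam k₁ k₂ Z g w₂)
      (shearWave lam k₁ k₂ Z g 0) t x y z = 0 := by
  rw [divergence, (hasDerivAt_x hg).deriv, (hasDerivAt_y hg).deriv, (hasDerivAt_z (hZ z)).deriv]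
  simp only [shearWave]
  linear_combination exp (-lam * t) * Z z * g' (k₁ * x + k₂ * y) * hwk

lemma robin {β s : ℝ} (hZ : HasDerivAt Z (Z' z) z) (hbc : s * Z' z + β * Z z = 0) :
    s * deriv (fun z => shearWave lam k₁ k₂ Z g w t x y z) z
      + β * shearWave lam k₁ k₂ Z g w t x y z = 0 := by
  rw [(hasDerivAt_z hZ).deriv]
  simp only [shearWave]
  linear_combination w * exp (-lam * t) * g (k₁ * x + k₂ * y) * hbc

end shearWave

theorem stmt_16_general (β : ℝ) (m n : ℕ) (hn : 1 ≤ n)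
    (a b c d : ℝ) (hcoef : (a = -c ∧ b = d) ∨ (a = c ∧ b = -d))
    (γ : ℝ) (Z : ℝ → ℝ)
    (hZ : ((Z = fun z => Real.cos (γ * z)) ∧ β * Real.cos γ = γ * Real.sin γ) ∨
          ((Z = fun z => Real.sin (γ * z)) ∧ β * Real.sin γ = -(γ * Real.cos γ)))
    (lam : ℝ) (hlam : lam = ((m : ℝ) ^ 2 + (n : ℝ) ^ 2) + γ ^ 2)
    (u₁ u₂ u₃ : ℝ → ℝ → ℝ → ℝ)
    (hu₁ : ∀ x y z, u₁ x y z = Z z * Pu m n a b c d x y)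
    (hu₂ : ∀ x y z, u₂ x y z = -((m : ℝ) / (n : ℝ)) * Z z * Pv m n a b c d x y)
    (hu₃ : ∀ x y z, u₃ x y z = 0)
    (γ₀ : ℝ) (v₁ v₂ v₃ : ℝ → ℝ → ℝ → ℝ → ℝ)
    (hv₁ : ∀ t x y z, v₁ t x y z = γ₀ * Real.exp (-lam * t) * u₁ x y z)
    (hv₂ : ∀ t x y z, v₂ t x y z = γ₀ * Real.exp (-lam * t) * u₂ x y z)
    (hv₃ : ∀ t x y z, v₃ t x y z = γ₀ * Real.exp (-lam * t) * u₃ x y z) :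
    (∀ t x y z : ℝ,
      (deriv (fun t' => v₁ t' x y z) t
        - (deriv (deriv (fun x' => v₁ t x' y z)) x + deriv (deriv (fun y' => v₁ t x y' z)) y
            + deriv (deriv (fun z' => v₁ t x y z')) z)
        + (v₁ t x y z * deriv (fun x' => v₁ t x' y z) x
            + v₂ t x y z * deriv (fun y' => v₁ t x y' z) y
            + v₃ t x y z * deriv (fun z' => v₁ t x y z') z) = 0) ∧
      (deriv (fun t' => v₂ t' x y z) t
        - (deriv (deriv (fun x' => v₂ t x' y z)) x + deriv (deriv (fun y' => v₂ t x y' z)) y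
            + deriv (deriv (fun z' => v₂ t x y z')) z)
        + (v₁ t x y z * deriv (fun x' => v₂ t x' y z) x
            + v₂ t x y z * deriv (fun y' => v₂ t x y' z) y
            + v₃ t x y z * deriv (fun z' => v₂ t x y z') z) = 0) ∧
      (deriv (fun t' => v₃ t' x y z) t
        - (deriv (deriv (fun x' => v₃ t x' y z)) x + deriv (deriv (fun y' => v₃ t x y' z)) y
            + deriv (deriv (fun z' => v₃ t x y z')) z)
        + (v₁ t x y z * deriv (fun x' => v₃ t x' y z) x
            + v₂ t x y z * deriv (fun y' => v₃ t x y' z) y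
            + v₃ t x y z * deriv (fun z' => v₃ t x y z') z) = 0)) ∧
    (∀ t x y z : ℝ,
      deriv (fun x' => v₁ t x' y z) x + deriv (fun y' => v₂ t x y' z) y
        + deriv (fun z' => v₃ t x y z') z = 0) ∧
    (∀ t x y z : ℝ, v₃ t x y z = 0) ∧
    (∀ t x y : ℝ,
      (deriv (fun z => v₁ t x y z) 1 + β * v₁ t x y 1 = 0) ∧
      (deriv (fun z => v₂ t x y z) 1 + β * v₂ t x y 1 = 0) ∧
      (-deriv (fun z => v₁ t x y z) (-1) + β * v₁ t x y (-1) = 0) ∧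
      (-deriv (fun z => v₂ t x y z) (-1) + β * v₂ t x y (-1) = 0)) := by
  obtain ⟨A, B, rfl, hbc₁, hbc₂⟩ := exists_sinusoid_robin hZ
  obtain ⟨σ, hσ, hP⟩ := Pu_Pv_eq_sinusoid (m := m) (n := n) hcoef
  have hn' : (n : ℝ) ≠ 0 := by positivity
  set V := shearWave lam m (σ * n) (sinusoid γ A B) (sinusoid 1 d (-c))
  obtain rfl : v₁ = V γ₀ := by
    funext t x y z; simp only [hv₁, hu₁, (hP x y).1, V, shearWave]; ring_nf
  obtain rfl : v₂ = V (-(γ₀ * (m / n) * σ)) := by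
    funext t x y z; simp only [hv₂, hu₂, (hP x y).2, V, shearWave]; ring_nf
  obtain rfl : v₃ = V 0 := by
    funext t x y z; simp [hv₃, hu₃, V, shearWave]
  have hlam' : lam = 1 ^ 2 * ((m : ℝ) ^ 2 + (σ * n) ^ 2) + γ ^ 2 := by
    linear_combination hlam - (n : ℝ) ^ 2 * hσ
  have hwk : γ₀ * m + -(γ₀ * (m / n) * σ) * (σ * n) = 0 := by
    field_simp; linear_combination (-(γ₀ * m)) * hσ
  have hg := hasDerivAt_sinusoid 1 d (-c)
  have hg' := hasDerivAt_sinusoid_deriv 1 d (-c)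
  have hZ := hasDerivAt_sinusoid γ A B
  have hZ' := hasDerivAt_sinusoid_deriv γ A B
  have robin₁ (w t x y : ℝ) : deriv (fun z => V w t x y z) 1 + β * V w t x y 1 = 0 := by
    simpa only [one_mul] using shearWave.robin (hZ 1) hbc₁
  have robin₂ (w t x y : ℝ) : -deriv (fun z => V w t x y z) (-1) + β * V w t x y (-1) = 0 := by
    simpa only [neg_one_mul] using shearWave.robin (hZ (-1)) hbc₂
  have momentum (w t x y z : ℝ) :
      momentumResidual (V γ₀) (V (-(γ₀ * (m / n) * σ))) (V 0) (V w) t x y z = 0 :=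
    shearWave.momentumResidual_eq_zero hg hg' hZ hZ' hlam' hwk w
  exact ⟨fun t x y z => ⟨momentum _ t x y z, momentum _ t x y z, momentum _ t x y z⟩,
    fun t x y z => shearWave.divergence_eq_zero hg hZ hwk, fun t x y z => zero_mul _,
    fun t x y => ⟨robin₁ _ t x y, robin₁ _ t x y, robin₂ _ t x y, robin₂ _ t x y⟩⟩

/-- With a = −c, b = d (or a = c, b = −d), the field v = γ₀ e^{−λt} u, where u is a
constant-pressure Stokes eigenfunction with eigenvalue λ, is a global solution of
the Navier–Stokes equations on the channel with Navier slip-with-friction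
boundary conditions. -/
theorem stmt_16 (β : ℝ) (hβ : 0 < β) (m n : ℕ) (hm : 1 ≤ m) (hn : 1 ≤ n)
    (a b c d : ℝ) (hcoef : (a = -c ∧ b = d) ∨ (a = c ∧ b = -d))
    (γ : ℝ) (hγ : 0 < γ) (Z : ℝ → ℝ)
    (hZ : ((Z = fun z => Real.cos (γ * z)) ∧ β * Real.cos γ = γ * Real.sin γ) ∨
          ((Z = fun z => Real.sin (γ * z)) ∧ β * Real.sin γ = -(γ * Real.cos γ)))
    (lam : ℝ) (hlam : lam = ((m : ℝ) ^ 2 + (n : ℝ) ^ 2) + γ ^ 2)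
    (u₁ u₂ u₃ : ℝ → ℝ → ℝ → ℝ)
    (hu₁ : ∀ x y z, u₁ x y z = Z z * Pu m n a b c d x y)
    (hu₂ : ∀ x y z, u₂ x y z = -((m : ℝ) / (n : ℝ)) * Z z * Pv m n a b c d x y)
    (hu₃ : ∀ x y z, u₃ x y z = 0)
    (γ₀ : ℝ) (v₁ v₂ v₃ : ℝ → ℝ → ℝ → ℝ → ℝ)
    (hv₁ : ∀ t x y z, v₁ t x y z = γ₀ * Real.exp (-lam * t) * u₁ x y z)
    (hv₂ : ∀ t x y z, v₂ t x y z = γ₀ * Real.exp (-lam * t) * u₂ x y z)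
    (hv₃ : ∀ t x y z, v₃ t x y z = γ₀ * Real.exp (-lam * t) * u₃ x y z) :
    (∀ t x y z : ℝ,
      (deriv (fun t' => v₁ t' x y z) t
        - (deriv (deriv (fun x' => v₁ t x' y z)) x + deriv (deriv (fun y' => v₁ t x y' z)) y
            + deriv (deriv (fun z' => v₁ t x y z')) z)
        + (v₁ t x y z * deriv (fun x' => v₁ t x' y z) x
            + v₂ t x y z * deriv (fun y' => v₁ t x y' z) y
            + v₃ t x y z * deriv (fun z' => v₁ t x y z') z) = 0) ∧
      (deriv (fun t' => v₂ t' x y z) t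
        - (deriv (deriv (fun x' => v₂ t x' y z)) x + deriv (deriv (fun y' => v₂ t x y' z)) y
            + deriv (deriv (fun z' => v₂ t x y z')) z)
        + (v₁ t x y z * deriv (fun x' => v₂ t x' y z) x
            + v₂ t x y z * deriv (fun y' => v₂ t x y' z) y
            + v₃ t x y z * deriv (fun z' => v₂ t x y z') z) = 0) ∧
      (deriv (fun t' => v₃ t' x y z) t
        - (deriv (deriv (fun x' => v₃ t x' y z)) x + deriv (deriv (fun y' => v₃ t x y' z)) y
            + deriv (deriv (fun z' => v₃ t x y z')) z)
        + (v₁ t x y z * deriv (fun x' => v₃ t x' y z) x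
            + v₂ t x y z * deriv (fun y' => v₃ t x y' z) y
            + v₃ t x y z * deriv (fun z' => v₃ t x y z') z) = 0)) ∧
    (∀ t x y z : ℝ,
      deriv (fun x' => v₁ t x' y z) x + deriv (fun y' => v₂ t x y' z) y
        + deriv (fun z' => v₃ t x y z') z = 0) ∧
    (∀ t x y z : ℝ, v₃ t x y z = 0) ∧
    (∀ t x y : ℝ,
      (deriv (fun z => v₁ t x y z) 1 + β * v₁ t x y 1 = 0) ∧
      (deriv (fun z => v₂ t x y z) 1 + β * v₂ t x y 1 = 0) ∧
      (-deriv (fun z => v₁ t x y z) (-1) + β * v₁ t x y (-1) = 0) ∧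
      (-deriv (fun z => v₂ t x y z) (-1) + β * v₂ t x y (-1) = 0)) :=
  stmt_16_general β m n hn a b c d hcoef γ Z hZ lam hlam u₁ u₂ u₃ hu₁ hu₂ hu₃ γ₀ v₁ v₂ v₃ hv₁ hv₂
    hv₃
end
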